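/- arXiv:1304.3295 — 2 statements merged into one kernel-verified Lean document; each statement's English description precedes it below -/
import Mathlib

section
/- Let γ be a nonzero real number and let p_n : ℝ → ℝ be defined by p_{2n}(x) = ((−γ)^n/√(n!))·C_n(x²; γ²) and p_{2n+1}(x) = −((−γ)^{n−1}/√(n!))·x·C_n(x²−1; γ²). Then for all integers m, n ≥ 0 the following discrete orthogonality relation holds: Σ_{k=0}^{∞} (γ^{2k}/(2·k!))·( p_n(√k)·p_m(√k) + p_n(−√k)·p_m(−√k) ) = e^{γ²}·δ_{mn}, where the sum over k is an absolutely convergent infinite series and δ_{mn} is the Kronecker delta. -/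
/-!
Write `a = γ²`. The weight `a^k/k!` turns falling factorials into shifts:
`∑ₖ aᵏ/k! · k(k-1)⋯(k-i+1) · f k = aⁱ · ∑ₗ aˡ/l! · f (l + i)`. Combined with the difference
relation `C_{m+1}(x+1) = C_{m+1}(x) - (m+1)/a · C_m(x)` and Pascal's rule, this gives
`∑ₖ aᵏ/k! · k(k-1)⋯(k-i+1) · C_m(k) = eᵃ aⁱ (i choose m) m! (-1/a)^m`, which vanishes for `i < m`.
Expanding `C_n` in falling factorials yields `∑ₖ aᵏ/k! · C_n(k) C_m(k) = eᵃ n!/aⁿ δₘₙ`.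

On the nodes `±√k`, `p_{2n}` is even and `p_{2n+1}` is odd, so mixed parities cancel. For even
indices the sum is the Charlier sum at `x² = k`; for odd indices the term `k = 0` vanishes and the
factor `x² = k + 1` cancels against `(k + 1)! = (k + 1) k!`, which shifts the sum back to the
Charlier sum. Absolute convergence follows from `|C_n(k; a)| ≤ (1 + k/|a|)ⁿ ≤ n! e^{1 + k/|a|}`.
-/

/-- The Charlier polynomial `C_n(x; a) = ₂F₀(-n, -x; —; -1/a)
  = ∑_{k=0}^{n} (n choose k)·x(x-1)⋯(x-k+1)·(-1/a)^k`,
  regarded as a polynomial function of a real variable `x`. -/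
noncomputable def charlier (a : ℝ) (n : ℕ) (x : ℝ) : ℝ :=
  ∑ k ∈ Finset.range (n + 1),
    (n.choose k : ℝ) * (∏ j ∈ Finset.range k, (x - (j : ℝ))) * (-1 / a) ^ k

open Finset Nat Polynomial Real

theorem descPochhammer_eval_add_one {R : Type*} [CommRing R] (n : ℕ) (x : R) :
    (descPochhammer R (n + 1)).eval (x + 1) =
      (descPochhammer R (n + 1)).eval x + (n + 1) * (descPochhammer R n).eval x := by
  have h := congrArg (eval (x + 1)) (descPochhammer_succ_comp_X_sub_one R n)
  simp only [eval_comp, eval_sub, eval_X, eval_one, add_sub_cancel_right, smul_eq_mul, eval_mul,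
    eval_add, eval_natCast] at h
  linear_combination -h

theorem charlier_eq_sum_descPochhammer (a : ℝ) (n : ℕ) (x : ℝ) :
    charlier a n x =
      ∑ j ∈ range (n + 1), (n.choose j : ℝ) * (descPochhammer ℝ j).eval x * (-1 / a) ^ j := by
  simp only [charlier, descPochhammer_eval_eq_prod_range]

@[simp]
theorem charlier_zero (a x : ℝ) : charlier a 0 x = 1 := by
  simp [charlier]

theorem charlier_succ_add_one (a : ℝ) (n : ℕ) (x : ℝ) :
    charlier a (n + 1) (x + 1) = charlier a (n + 1) x - (n + 1) / a * charlier a n x := by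
  have step (j : ℕ) :
      ((n + 1).choose (j + 1) : ℝ) * (descPochhammer ℝ (j + 1)).eval (x + 1) * (-1 / a) ^ (j + 1) =
        ((n + 1).choose (j + 1) : ℝ) * (descPochhammer ℝ (j + 1)).eval x * (-1 / a) ^ (j + 1) -
          (n + 1) / a * ((n.choose j : ℝ) * (descPochhammer ℝ j).eval x * (-1 / a) ^ j) := by
    have h : ((n + 1 : ℕ) : ℝ) * n.choose j = (n + 1).choose (j + 1) * (j + 1 : ℕ) := by
      exact_mod_cast Nat.add_one_mul_choose_eq n j
    rw [descPochhammer_eval_add_one]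
    push_cast at h
    linear_combination ((1 / a) * (-1 / a) ^ j * (descPochhammer ℝ j).eval x) * h
  simp only [charlier_eq_sum_descPochhammer]
  rw [sum_range_succ' _ (n + 1), sum_range_succ' _ (n + 1), sum_congr rfl fun j _ => step j,
    sum_sub_distrib, mul_sum]
  simp only [descPochhammer_zero, eval_one]
  ring

theorem hasSum_pow_div_factorial_mul_descFactorial_mul {a s : ℝ} {f : ℕ → ℝ} (i : ℕ)
    (h : HasSum (fun l : ℕ => a ^ l / l ! * f (l + i)) s) :
    HasSum (fun k : ℕ => a ^ k / k ! * k.descFactorial i * f k) (a ^ i * s) := by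
  have hhead : ∑ k ∈ range i, a ^ k / k ! * k.descFactorial i * f k = 0 :=
    sum_eq_zero fun k hk => by simp [Nat.descFactorial_of_lt (mem_range.mp hk)]
  rw [← hasSum_nat_add_iff' i, hhead, sub_zero]
  refine (h.mul_left (a ^ i)).congr_fun fun l => ?_
  have hfac : ((l + i - i) ! * (l + i).descFactorial i : ℝ) = (l + i) ! := by
    exact_mod_cast Nat.factorial_mul_descFactorial (Nat.le_add_left i l)
  rw [Nat.add_sub_cancel] at hfac
  rw [← hfac, pow_add]
  field_simp

theorem hasSum_pow_div_factorial_mul_charlier {a : ℝ} (ha : a ≠ 0) (m : ℕ) :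
    HasSum (fun k : ℕ => a ^ k / k ! * charlier a m k) (exp a * 0 ^ m) := by
  have hmoment (j : ℕ) :
      HasSum (fun k : ℕ => a ^ k / k ! * k.descFactorial j) (a ^ j * exp a) := by
    simpa using hasSum_pow_div_factorial_mul_descFactorial_mul (f := fun _ => 1) j
      (by simpa [Real.exp_eq_exp_ℝ] using NormedSpace.expSeries_div_hasSum_exp a)
  have hsum := hasSum_sum fun j (_ : j ∈ range (m + 1)) =>
    (hmoment j).mul_left ((m.choose j : ℝ) * (-1 / a) ^ j)
  have hval : exp a * 0 ^ m =
      ∑ j ∈ range (m + 1), (m.choose j : ℝ) * (-1 / a) ^ j * (a ^ j * exp a) := by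
    rw [← neg_add_cancel (1 : ℝ), add_pow, mul_sum]
    refine sum_congr rfl fun j _ => ?_
    rw [div_pow]
    field_simp
    ring
  rw [hval]
  refine hsum.congr_fun fun k => ?_
  rw [charlier_eq_sum_descPochhammer, mul_sum]
  refine sum_congr rfl fun j _ => ?_
  rw [descPochhammer_eval_eq_descFactorial]
  ring

theorem hasSum_pow_div_factorial_mul_charlier_add {a : ℝ} (ha : a ≠ 0) (i m : ℕ) :
    HasSum (fun l : ℕ => a ^ l / l ! * charlier a m (l + i : ℕ))
      (exp a * i.choose m * m ! * (-1 / a) ^ m) := by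
  induction i generalizing m with
  | zero =>
    cases m with
    | zero => simpa using hasSum_pow_div_factorial_mul_charlier ha 0
    | succ m => simpa using hasSum_pow_div_factorial_mul_charlier ha (m + 1)
  | succ i ih =>
    cases m with
    | zero => simpa using ih 0
    | succ m =>
      have hval : exp a * (i + 1).choose (m + 1) * (m + 1)! * (-1 / a) ^ (m + 1) =
          exp a * i.choose (m + 1) * (m + 1)! * (-1 / a) ^ (m + 1) -
            (m + 1) / a * (exp a * i.choose m * m ! * (-1 / a) ^ m) := by
        push_cast [Nat.choose_succ_succ, Nat.factorial_succ]
        ring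
      rw [hval]
      refine ((ih (m + 1)).sub ((ih m).mul_left ((m + 1) / a))).congr_fun fun l => ?_
      rw [← add_assoc, Nat.cast_succ, charlier_succ_add_one]
      ring

theorem hasSum_pow_div_factorial_mul_charlier_mul_charlier {a : ℝ} (ha : a ≠ 0) (n m : ℕ) :
    HasSum (fun k : ℕ => a ^ k / k ! * (charlier a n k * charlier a m k))
      (exp a * n ! / a ^ n * if m = n then 1 else 0) := by
  wlog hnm : n ≤ m generalizing n m
  · have h := this m n (by omega)
    rcases eq_or_ne m n with rfl | hmn
    · exact h
    · simpa [hmn, Ne.symm hmn, mul_comm (charlier a m _)] using h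
  have hterm (j : ℕ) : HasSum (fun k : ℕ => a ^ k / k ! * k.descFactorial j * charlier a m k)
      (a ^ j * (exp a * j.choose m * m ! * (-1 / a) ^ m)) :=
    hasSum_pow_div_factorial_mul_descFactorial_mul j
      (hasSum_pow_div_factorial_mul_charlier_add ha j m)
  have hsum := hasSum_sum fun j (_ : j ∈ range (n + 1)) =>
    (hterm j).mul_left ((n.choose j : ℝ) * (-1 / a) ^ j)
  have hval : (exp a * n ! / a ^ n * if m = n then 1 else 0) =
      ∑ j ∈ range (n + 1), (n.choose j : ℝ) * (-1 / a) ^ j *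
        (a ^ j * (exp a * j.choose m * m ! * (-1 / a) ^ m)) := by
    rw [sum_eq_single n]
    · rcases eq_or_ne m n with rfl | hmn
      · have h1 : (-1 / a) ^ m * a ^ m * (-1 / a) ^ m = 1 / a ^ m := by
          rw [← mul_pow, div_mul_cancel₀ _ ha, ← mul_pow, neg_one_mul, neg_div, neg_neg,
            one_div_pow]
        rw [if_pos rfl, Nat.choose_self]
        linear_combination -(exp a * m !) * h1
      · simp [hmn, Nat.choose_eq_zero_of_lt (lt_of_le_of_ne hnm (Ne.symm hmn))]
    · intro j hj hjn
      rw [Nat.choose_eq_zero_of_lt (n := j) (k := m) (by simp at hj; omega)]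
      simp
    · simp
  rw [hval]
  refine hsum.congr_fun fun k => ?_
  rw [charlier_eq_sum_descPochhammer a n, sum_mul, mul_sum]
  refine sum_congr rfl fun j _ => ?_
  rw [descPochhammer_eval_eq_descFactorial]
  ring

theorem abs_charlier_natCast_le (a : ℝ) (n k : ℕ) : |charlier a n k| ≤ (k * |a⁻¹| + 1) ^ n := by
  rw [charlier_eq_sum_descPochhammer, add_pow]
  refine (abs_sum_le_sum_abs _ _).trans (sum_le_sum fun j _ => ?_)
  rw [descPochhammer_eval_eq_descFactorial, abs_mul, abs_mul, abs_pow, div_eq_mul_inv,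
    neg_one_mul, abs_neg, Nat.abs_cast, Nat.abs_cast, one_pow, mul_one, mul_pow,
    mul_comm (_ * _) (n.choose j : ℝ), ← mul_assoc]
  gcongr
  exact_mod_cast Nat.descFactorial_le_pow k j

theorem summable_abs_pow_div_factorial_mul_charlier_mul_charlier (a : ℝ) (n m : ℕ) :
    Summable (fun k : ℕ => |a ^ k / k ! * (charlier a n k * charlier a m k)|) := by
  have hdom : Summable (fun k : ℕ => (n + m)! * exp 1 * ((|a| * exp |a⁻¹|) ^ k / k !)) :=
    (Real.summable_pow_div_factorial _).mul_left _
  refine hdom.of_nonneg_of_le (fun k => abs_nonneg _) fun k => ?_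
  have hpoly : (k * |a⁻¹| + 1) ^ (n + m) ≤ (n + m)! * exp (k * |a⁻¹| + 1) := by
    have := Real.pow_div_factorial_le_exp (k * |a⁻¹| + 1) (by positivity) (n + m)
    rwa [div_le_iff₀' (by positivity)] at this
  calc |a ^ k / k ! * (charlier a n k * charlier a m k)|
      = |a| ^ k / k ! * (|charlier a n k| * |charlier a m k|) := by
        rw [abs_mul, abs_mul, abs_div, abs_pow, Nat.abs_cast]
    _ ≤ |a| ^ k / k ! * ((k * |a⁻¹| + 1) ^ n * (k * |a⁻¹| + 1) ^ m) := by
        gcongr <;> exact abs_charlier_natCast_le a _ k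
    _ ≤ |a| ^ k / k ! * ((n + m)! * exp (k * |a⁻¹| + 1)) := by
        rw [← pow_add]
        gcongr
    _ = (n + m)! * exp 1 * ((|a| * exp |a⁻¹|) ^ k / k !) := by
        rw [Real.exp_add, Real.exp_nat_mul]
        ring

theorem charlier_orthonormal {a : ℝ} (ha : a ≠ 0) {c : ℕ → ℝ} (hc : ∀ n, c n ^ 2 = a ^ n / n !)
    (n m : ℕ) :
    Summable (fun k : ℕ => |c n * c m * (a ^ k / k ! * (charlier a n k * charlier a m k))|) ∧
      HasSum (fun k : ℕ => c n * c m * (a ^ k / k ! * (charlier a n k * charlier a m k)))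
        (exp a * if m = n then 1 else 0) := by
  refine ⟨?_, ?_⟩
  · simpa only [abs_mul] using
      (summable_abs_pow_div_factorial_mul_charlier_mul_charlier a n m).mul_left |c n * c m|
  · have hval : (exp a * if m = n then 1 else 0) =
        c n * c m * (exp a * n ! / a ^ n * if m = n then 1 else 0) := by
      rcases eq_or_ne m n with rfl | hmn
      · rw [if_pos rfl, ← sq, hc]
        field_simp
      · simp [hmn]
    rw [hval]
    exact (hasSum_pow_div_factorial_mul_charlier_mul_charlier ha n m).mul_left _

noncomputable def sqrtNodeTerm (γ : ℝ) (f g : ℝ → ℝ) (k : ℕ) : ℝ :=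
  γ ^ (2 * k) / (2 * (k ! : ℝ)) * (f √k * g √k + f (-√k) * g (-√k))

theorem sqrtNodeTerm_eq_zero_of_odd_mul (γ : ℝ) {f g : ℝ → ℝ} (h : (f * g).Odd) :
    sqrtNodeTerm γ f g = 0 := by
  ext k
  have hk : f (-√k) * g (-√k) = -(f √k * g √k) := h √k
  simp [sqrtNodeTerm, hk]

theorem sqrtNodeTerm_of_even_mul (γ : ℝ) {f g : ℝ → ℝ} (h : (f * g).Even) (k : ℕ) :
    sqrtNodeTerm γ f g k = (γ ^ 2) ^ k / k ! * (f √k * g √k) := by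
  have hk : f (-√k) * g (-√k) = f √k * g √k := h √k
  rw [sqrtNodeTerm, hk, ← pow_mul]
  field_simp
  ring

noncomputable def evenCharlierFun (γ : ℝ) (n : ℕ) (x : ℝ) : ℝ :=
  ((-γ) ^ n / √(n ! : ℝ)) * charlier (γ ^ 2) n (x ^ 2)

noncomputable def oddCharlierFun (γ : ℝ) (n : ℕ) (x : ℝ) : ℝ :=
  -(((-γ) ^ ((n : ℤ) - 1) / √(n ! : ℝ)) * x * charlier (γ ^ 2) n (x ^ 2 - 1))

theorem evenCharlierFun_even (γ : ℝ) (n : ℕ) : (evenCharlierFun γ n).Even := by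
  intro x
  simp [evenCharlierFun]

theorem oddCharlierFun_odd (γ : ℝ) (n : ℕ) : (oddCharlierFun γ n).Odd := by
  intro x
  simp [oddCharlierFun]

theorem sq_neg_pow_div_sqrt_factorial (γ : ℝ) (n : ℕ) :
    ((-γ) ^ n / √(n ! : ℝ)) ^ 2 = (γ ^ 2) ^ n / n ! := by
  rw [div_pow, sq_sqrt (by positivity), ← pow_mul, mul_comm, pow_mul, neg_sq]

theorem sq_mul_neg_zpow_div_sqrt_factorial {γ : ℝ} (hγ : γ ≠ 0) (n : ℕ) :
    (γ * ((-γ) ^ ((n : ℤ) - 1) / √(n ! : ℝ))) ^ 2 = (γ ^ 2) ^ n / n ! := by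
  rw [mul_pow, div_pow, sq_sqrt (by positivity), sq ((-γ) ^ _), ← mul_zpow, neg_mul_neg, ← sq,
    zpow_sub_one₀ (pow_ne_zero 2 hγ), zpow_natCast]
  field_simp

theorem sqrtNodeTerm_evenCharlierFun {γ : ℝ} (hγ : γ ≠ 0) (u v : ℕ) :
    Summable (fun k => |sqrtNodeTerm γ (evenCharlierFun γ u) (evenCharlierFun γ v) k|) ∧
      HasSum (sqrtNodeTerm γ (evenCharlierFun γ u) (evenCharlierFun γ v))
        (exp (γ ^ 2) * if v = u then 1 else 0) := by
  have hterm : sqrtNodeTerm γ (evenCharlierFun γ u) (evenCharlierFun γ v) = fun k : ℕ =>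
      (-γ) ^ u / √(u ! : ℝ) * ((-γ) ^ v / √(v ! : ℝ)) *
        ((γ ^ 2) ^ k / k ! * (charlier (γ ^ 2) u k * charlier (γ ^ 2) v k)) := by
    ext k
    rw [sqrtNodeTerm_of_even_mul γ ((evenCharlierFun_even γ u).mul_even (evenCharlierFun_even γ v)),
      evenCharlierFun, evenCharlierFun, sq_sqrt k.cast_nonneg]
    ring
  rw [hterm]
  exact charlier_orthonormal (pow_ne_zero 2 hγ) (sq_neg_pow_div_sqrt_factorial γ) u v

theorem sqrtNodeTerm_oddCharlierFun {γ : ℝ} (hγ : γ ≠ 0) (u v : ℕ) :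
    Summable (fun k => |sqrtNodeTerm γ (oddCharlierFun γ u) (oddCharlierFun γ v) k|) ∧
      HasSum (sqrtNodeTerm γ (oddCharlierFun γ u) (oddCharlierFun γ v))
        (exp (γ ^ 2) * if v = u then 1 else 0) := by
  have hsymm := (oddCharlierFun_odd γ u).mul_odd (oddCharlierFun_odd γ v)
  have hzero : sqrtNodeTerm γ (oddCharlierFun γ u) (oddCharlierFun γ v) 0 = 0 := by
    simp [sqrtNodeTerm_of_even_mul γ hsymm, oddCharlierFun]
  have hsucc (k : ℕ) : sqrtNodeTerm γ (oddCharlierFun γ u) (oddCharlierFun γ v) (k + 1) =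
      γ * ((-γ) ^ ((u : ℤ) - 1) / √(u ! : ℝ)) * (γ * ((-γ) ^ ((v : ℤ) - 1) / √(v ! : ℝ))) *
        ((γ ^ 2) ^ k / k ! * (charlier (γ ^ 2) u k * charlier (γ ^ 2) v k)) := by
    have hx : √((k : ℝ) + 1) ^ 2 = k + 1 := sq_sqrt (by positivity)
    rw [sqrtNodeTerm_of_even_mul γ hsymm, oddCharlierFun, oddCharlierFun, Nat.factorial_succ]
    push_cast
    rw [hx, add_sub_cancel_right]
    field_simp
    rw [hx]
    ring
  obtain ⟨hsum, hval⟩ := charlier_orthonormal (pow_ne_zero 2 hγ)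
    (sq_mul_neg_zpow_div_sqrt_factorial hγ) u v
  refine ⟨(summable_nat_add_iff 1).mp ?_, (hasSum_nat_add_iff' 1).mp ?_⟩
  · simpa only [hsucc] using hsum
  · simpa [hsucc, hzero] using hval

/-- Discrete orthogonality of the polynomials `p_n` (built from Charlier polynomials) on the
support `S = {±√k : k ∈ ℤ₊}` with weight `w(±√k) = γ^{2k}/(2·k!)` for `k ≥ 1` and `w(0) = 1`:
`∑_{k=0}^{∞} (γ^{2k}/(2·k!))·(p_n(√k)p_m(√k) + p_n(-√k)p_m(-√k)) = e^{γ²}·δ_{mn}`,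
the sum being an absolutely convergent series. -/
theorem charlier_p_orthogonality (γ : ℝ) (hγ : γ ≠ 0) (p : ℕ → ℝ → ℝ)
    (hpeven : ∀ (n : ℕ) (x : ℝ),
      p (2 * n) x = ((-γ) ^ n / Real.sqrt (n.factorial : ℝ)) * charlier (γ ^ 2) n (x ^ 2))
    (hpodd : ∀ (n : ℕ) (x : ℝ),
      p (2 * n + 1) x =
        -(((-γ) ^ ((n : ℤ) - 1) / Real.sqrt (n.factorial : ℝ)) * x *
          charlier (γ ^ 2) n (x ^ 2 - 1)))
    (m n : ℕ) :
    Summable (fun k : ℕ => |γ ^ (2 * k) / (2 * (k.factorial : ℝ)) *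
      (p n (Real.sqrt k) * p m (Real.sqrt k) + p n (-Real.sqrt k) * p m (-Real.sqrt k))|) ∧
    ∑' k : ℕ, γ ^ (2 * k) / (2 * (k.factorial : ℝ)) *
      (p n (Real.sqrt k) * p m (Real.sqrt k) + p n (-Real.sqrt k) * p m (-Real.sqrt k)) =
      Real.exp (γ ^ 2) * (if m = n then 1 else 0) := by
  suffices h : Summable (fun k => |sqrtNodeTerm γ (p n) (p m) k|) ∧
      HasSum (sqrtNodeTerm γ (p n) (p m)) (exp (γ ^ 2) * if m = n then 1 else 0) from
    ⟨h.1, h.2.tsum_eq⟩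
  have hev (u : ℕ) : p (2 * u) = evenCharlierFun γ u := funext (hpeven u)
  have hodd (u : ℕ) : p (2 * u + 1) = oddCharlierFun γ u := funext (hpodd u)
  obtain ⟨u, rfl | rfl⟩ := Nat.even_or_odd' n <;> obtain ⟨v, rfl | rfl⟩ := Nat.even_or_odd' m
  · simpa [hev] using sqrtNodeTerm_evenCharlierFun hγ u v
  · rw [hev, hodd, sqrtNodeTerm_eq_zero_of_odd_mul γ
      ((evenCharlierFun_even γ u).mul_odd (oddCharlierFun_odd γ v)), if_neg (by omega), mul_zero]
    exact ⟨by simp, hasSum_zero⟩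
  · rw [hev, hodd, sqrtNodeTerm_eq_zero_of_odd_mul γ
      ((oddCharlierFun_odd γ u).mul_even (evenCharlierFun_even γ v)), if_neg (by omega), mul_zero]
    exact ⟨by simp, hasSum_zero⟩
  · simpa [hodd] using sqrtNodeTerm_oddCharlierFun hγ u v
end

section
/- For every nonzero real number a, all nonnegative integers x and y, and every real number t with t ≠ a, the bilinear generating function identity holds: Σ_{m=0}^{∞} (t^m/m!)·C_m(x; a)·C_m(y; a) = e^{t}·(1 − t/a)^{x+y}·Σ_{k=0}^{min(x,y)} (x choose k)·(y choose k)·k!·( t/(a−t)² )^{k}, the infinite series converging absolutely. -/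
/-!
For natural `m` and `x` the Charlier polynomials are self-dual, `C_m(x) = C_x(m)`, and
`C_x(m) = ∑_{i ≤ x} (x choose i) m^{(i)} u^i` with `u = -1/a` and the falling
factorial `m^{(i)} = m(m-1)⋯(m-i+1)` is a polynomial in `m`, so the
series reduces to the moments `∑_m m^{(i)} m^{(j)} t^m/m!`. Writing
`m^{(i)} m^{(j)} = ∑_k (i choose k)(j choose k) k! m^{(i+j-k)}` and using
`∑_m m^{(r)} t^m/m! = t^r e^t` leaves a finite triple sum, in which the sums over `i` and `j`
collapse by the binomial theorem to `(x choose k) u^k (1 + u t)^{x-k}`.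
-/

open Finset
open scoped Nat

theorem charlier_natCast (a : ℝ) (n m : ℕ) :
    charlier a n m =
      ∑ k ∈ range (n + 1), (n.choose k : ℝ) * m.descFactorial k * (-1 / a) ^ k := by
  simp only [charlier, prod_range_natCast_sub, ← Nat.descFactorial_eq_prod_range]

theorem charlier_natCast_comm (a : ℝ) (m n : ℕ) : charlier a m n = charlier a n m := by
  have hcomm (k : ℕ) :
      (m.choose k * n.descFactorial k : ℝ) = n.choose k * m.descFactorial k := by
    norm_cast
    simp only [Nat.descFactorial_eq_factorial_mul_choose]
    ring
  have hm : ∀ k ≥ m + 1, (m.choose k : ℝ) * n.descFactorial k * (-1 / a) ^ k = 0 :=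
    fun k hk => by simp [Nat.choose_eq_zero_of_lt (show m < k by omega)]
  have hn : ∀ k ≥ n + 1, (n.choose k : ℝ) * m.descFactorial k * (-1 / a) ^ k = 0 :=
    fun k hk => by simp [Nat.choose_eq_zero_of_lt (show n < k by omega)]
  rw [charlier_natCast, charlier_natCast, ← eventually_constant_sum hm (Nat.le_add_right _ n),
    ← eventually_constant_sum hn (show n + 1 ≤ m + 1 + n by omega)]
  simp only [hcomm]

theorem Nat.add_descFactorial_eq_sum (n j i : ℕ) :
    (n + j).descFactorial i =
      ∑ k ∈ range (i + 1), i.choose k * j.descFactorial k * n.descFactorial (i - k) := by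
  rw [Nat.descFactorial_eq_factorial_mul_choose, Nat.add_comm n j, Nat.add_choose_eq,
    Nat.sum_antidiagonal_eq_sum_range_succ_mk, mul_sum]
  refine sum_congr rfl fun k hk => ?_
  rw [Nat.descFactorial_eq_factorial_mul_choose, Nat.descFactorial_eq_factorial_mul_choose,
    ← Nat.choose_mul_factorial_mul_factorial (mem_range_succ_iff.1 hk)]
  ring

theorem Nat.descFactorial_mul_descFactorial_eq_sum (m i j : ℕ) :
    m.descFactorial i * m.descFactorial j =
      ∑ k ∈ range (i + 1), i.choose k * j.choose k * k ! * m.descFactorial (i + j - k) := by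
  obtain hm | ⟨n, rfl⟩ : m < j ∨ ∃ n, m = n + j :=
    (lt_or_ge m j).imp_right fun h => ⟨m - j, by omega⟩
  · rw [Nat.descFactorial_of_lt hm, mul_zero]
    refine (sum_eq_zero fun k hk => ?_).symm
    rw [Nat.descFactorial_of_lt (by simp at hk; omega), mul_zero]
  · have hsplit (k : ℕ) (hk : k ∈ range (i + 1)) : (n + j).descFactorial (i + j - k) =
        n.descFactorial (i - k) * (n + j).descFactorial j := by
      rw [← Nat.descFactorial_mul_descFactorial (show j ≤ i + j - k by simp at hk; omega)]
      congr 2 <;> omega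
    rw [sum_congr rfl fun k hk => by rw [hsplit k hk, ← mul_assoc], ← sum_mul,
      Nat.add_descFactorial_eq_sum]
    congr 1
    refine sum_congr rfl fun k _ => ?_
    rw [Nat.descFactorial_eq_factorial_mul_choose j k]
    ring

theorem hasSum_descFactorial_mul_pow_div_factorial (t : ℝ) (r : ℕ) :
    HasSum (fun m : ℕ => (m.descFactorial r : ℝ) * (t ^ m / m !)) (t ^ r * Real.exp t) := by
  have hshift (n : ℕ) : ((n + r).descFactorial r : ℝ) * (t ^ (n + r) / (n + r)!) =
      t ^ r * (t ^ n / n !) := by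
    have hfac : ((n + r)! : ℝ) = n ! * (n + r).descFactorial r := by
      exact_mod_cast (Nat.add_sub_cancel n r ▸
        Nat.factorial_mul_descFactorial (Nat.le_add_left r n)).symm
    have hd : ((n + r).descFactorial r : ℝ) ≠ 0 := by
      exact_mod_cast (Nat.descFactorial_pos.2 (Nat.le_add_left r n)).ne'
    rw [hfac, pow_add]
    field_simp
  have hlow : ∑ m ∈ range r, (m.descFactorial r : ℝ) * (t ^ m / m !) = 0 :=
    sum_eq_zero fun m hm => by
      rw [Nat.descFactorial_of_lt (mem_range.1 hm), Nat.cast_zero, zero_mul]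
  rw [← hasSum_nat_add_iff' r, hlow, sub_zero, funext hshift, Real.exp_eq_exp_ℝ]
  exact (NormedSpace.expSeries_div_hasSum_exp t).mul_left _

theorem hasSum_descFactorial_mul_descFactorial_mul_pow_div_factorial (t : ℝ) (i j : ℕ) :
    HasSum (fun m : ℕ => (m.descFactorial i * m.descFactorial j : ℝ) * (t ^ m / m !))
      (Real.exp t *
        ∑ k ∈ range (i + 1), (i.choose k * j.choose k * k ! : ℝ) * t ^ (i + j - k)) := by
  simp only [← Nat.cast_mul, Nat.descFactorial_mul_descFactorial_eq_sum, Nat.cast_sum, sum_mul,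
    mul_sum]
  refine hasSum_sum fun k _ => ?_
  have h := (hasSum_descFactorial_mul_pow_div_factorial t (i + j - k)).mul_left
    (i.choose k * j.choose k * k ! : ℝ)
  rw [show Real.exp t * ((i.choose k * j.choose k * k ! : ℕ) * t ^ (i + j - k) : ℝ) =
    (i.choose k * j.choose k * k ! : ℝ) * (t ^ (i + j - k) * Real.exp t) by push_cast; ring]
  exact h.congr_fun fun m => by push_cast; ring

section CommSemiring

variable {R : Type*} [CommSemiring R]

theorem sum_choose_mul_choose_mul_pow (x k : ℕ) (u t : R) :
    ∑ i ∈ range (x + 1), (x.choose i * i.choose k : R) * u ^ i * t ^ (i - k) =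
      x.choose k * u ^ k * (1 + u * t) ^ (x - k) := by
  obtain hxk | hkx := lt_or_ge x k
  · rw [Nat.choose_eq_zero_of_lt hxk, Nat.cast_zero, zero_mul, zero_mul]
    refine sum_eq_zero fun i hi => ?_
    rw [Nat.choose_eq_zero_of_lt (by simp at hi; omega : i < k)]
    simp
  have hlow : ∑ i ∈ range k, (x.choose i * i.choose k : R) * u ^ i * t ^ (i - k) = 0 :=
    sum_eq_zero fun i hi => by simp [Nat.choose_eq_zero_of_lt (mem_range.1 hi)]
  rw [show x + 1 = k + (x - k + 1) by omega, sum_range_add, hlow, zero_add, add_comm 1, add_pow,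
    mul_sum]
  refine sum_congr rfl fun p _ => ?_
  have hchoose : (x.choose (k + p) * (k + p).choose k : R) = x.choose k * (x - k).choose p := by
    norm_cast
    rw [Nat.choose_mul (Nat.le_add_right k p), Nat.add_sub_cancel_left]
  rw [hchoose, Nat.add_sub_cancel_left, one_pow, pow_add, mul_pow]
  ring

theorem choose_mul_choose_mul_pow_sub (i j k : ℕ) (t : R) :
    (i.choose k * j.choose k : R) * t ^ (i + j - k) =
      t ^ k * (i.choose k * t ^ (i - k)) * (j.choose k * t ^ (j - k)) := by
  by_cases hk : k ≤ i ∧ k ≤ j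
  · rw [show i + j - k = k + (i - k) + (j - k) by omega, pow_add, pow_add]
    ring
  · rcases not_and_or.1 hk with hk | hk <;>
      simp [Nat.choose_eq_zero_of_lt (not_le.1 hk)]

theorem sum_sum_choose_mul_choose_mul_sum (x y : ℕ) (u t : R) :
    ∑ i ∈ range (x + 1), ∑ j ∈ range (y + 1), (x.choose i * u ^ i) * (y.choose j * u ^ j) *
        ∑ k ∈ range (i + 1), (i.choose k * j.choose k * k ! : R) * t ^ (i + j - k) =
      ∑ k ∈ range (x + 1), k ! * t ^ k *
        ((x.choose k * u ^ k * (1 + u * t) ^ (x - k)) *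
          (y.choose k * u ^ k * (1 + u * t) ^ (y - k))) := by
  have hext (i j : ℕ) (hi : i ∈ range (x + 1)) :
      ∑ k ∈ range (i + 1), (i.choose k * j.choose k * k ! : R) * t ^ (i + j - k) =
        ∑ k ∈ range (x + 1), (i.choose k * j.choose k * k ! : R) * t ^ (i + j - k) :=
    (eventually_constant_sum (fun k hk => by simp [Nat.choose_eq_zero_of_lt (by omega : i < k)])
      (by simp at hi; omega)).symm
  have hterm (i j k : ℕ) : (i.choose k * j.choose k * k ! : R) * t ^ (i + j - k) =
      k ! * t ^ k * ((i.choose k * t ^ (i - k)) * (j.choose k * t ^ (j - k))) := by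
    rw [mul_right_comm, choose_mul_choose_mul_pow_sub]
    ring
  calc _ = ∑ i ∈ range (x + 1), ∑ j ∈ range (y + 1), ∑ k ∈ range (x + 1), k ! * t ^ k *
          ((x.choose i * i.choose k : R) * u ^ i * t ^ (i - k) *
            ((y.choose j * j.choose k : R) * u ^ j * t ^ (j - k))) := by
        refine sum_congr rfl fun i hi => sum_congr rfl fun j _ => ?_
        rw [hext i j hi, mul_sum]
        refine sum_congr rfl fun k _ => ?_
        rw [hterm]
        ring
    _ = ∑ k ∈ range (x + 1), ∑ i ∈ range (x + 1), ∑ j ∈ range (y + 1), k ! * t ^ k *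
          ((x.choose i * i.choose k : R) * u ^ i * t ^ (i - k) *
            ((y.choose j * j.choose k : R) * u ^ j * t ^ (j - k))) :=
        (sum_congr rfl fun i _ => sum_comm).trans sum_comm
    _ = _ := sum_congr rfl fun k _ => by
        rw [← sum_choose_mul_choose_mul_pow, ← sum_choose_mul_choose_mul_pow, sum_mul_sum]
        simp only [mul_sum]

end CommSemiring

theorem eq_one_sub_div_pow_mul_div_sub_sq_pow (a t : ℝ) (ha : a ≠ 0) (hta : t ≠ a)
    {x y k : ℕ} (hkx : k ≤ x) (hky : k ≤ y) :
    t ^ k * (((-1 / a) ^ k * (1 + -1 / a * t) ^ (x - k)) *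
        ((-1 / a) ^ k * (1 + -1 / a * t) ^ (y - k))) =
      (1 - t / a) ^ (x + y) * (t / (a - t) ^ 2) ^ k := by
  have hat : a - t ≠ 0 := sub_ne_zero.2 hta.symm
  have hsq : (-1 / a) ^ 2 * t = (1 - t / a) ^ 2 * (t / (a - t) ^ 2) := by
    field_simp
  rw [show x + y = (x - k) + (y - k) + 2 * k by omega, pow_add, pow_add, pow_mul,
    mul_assoc _ (((1 - t / a) ^ 2) ^ k), ← mul_pow, ← hsq, mul_pow, ← pow_mul,
    show 1 + -1 / a * t = 1 - t / a by ring]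
  ring

theorem hasSum_pow_div_factorial_mul_charlier_mul_charlier_s11 (a t : ℝ) (x y : ℕ) :
    HasSum (fun m : ℕ => t ^ m / m ! * charlier a m x * charlier a m y)
      (Real.exp t * ∑ k ∈ range (x + 1), k ! * t ^ k *
        ((x.choose k * (-1 / a) ^ k * (1 + -1 / a * t) ^ (x - k)) *
          (y.choose k * (-1 / a) ^ k * (1 + -1 / a * t) ^ (y - k)))) := by
  have hexpand (m : ℕ) : t ^ m / m ! * charlier a m x * charlier a m y =
      ∑ i ∈ range (x + 1), ∑ j ∈ range (y + 1), (x.choose i * (-1 / a) ^ i) *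
        (y.choose j * (-1 / a) ^ j) *
          ((m.descFactorial i * m.descFactorial j : ℝ) * (t ^ m / m !)) := by
    rw [charlier_natCast_comm, charlier_natCast_comm a m y, charlier_natCast, charlier_natCast,
      mul_assoc, sum_mul_sum, mul_sum]
    exact sum_congr rfl fun i _ => by rw [mul_sum]; exact sum_congr rfl fun j _ => by ring
  rw [← sum_sum_choose_mul_choose_mul_sum, mul_sum]
  refine (hasSum_sum fun i _ => ?_).congr_fun hexpand
  rw [mul_sum]
  exact hasSum_sum fun j _ => by
    rw [mul_left_comm (Real.exp t)]
    exact (hasSum_descFactorial_mul_descFactorial_mul_pow_div_factorial t i j).mul_left _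

/-- Bilinear generating function for Charlier polynomials: for `a ≠ 0`, nonnegative
integers `x, y` and real `t ≠ a`,
`∑_{m=0}^{∞} (t^m/m!)·C_m(x;a)·C_m(y;a)
  = e^t·(1-t/a)^{x+y}·∑_{k=0}^{min(x,y)} (x choose k)(y choose k)·k!·(t/(a-t)²)^k`,
the infinite series converging absolutely. -/
theorem charlier_bilinear_generating_function (a : ℝ) (ha : a ≠ 0)
    (x y : ℕ) (t : ℝ) (hta : t ≠ a) :
    Summable (fun m : ℕ =>
      |t ^ m / (m.factorial : ℝ) * charlier a m (x : ℝ) * charlier a m (y : ℝ)|) ∧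
    ∑' m : ℕ, t ^ m / (m.factorial : ℝ) * charlier a m (x : ℝ) * charlier a m (y : ℝ) =
      Real.exp t * (1 - t / a) ^ (x + y) *
        ∑ k ∈ Finset.range (min x y + 1),
          (x.choose k : ℝ) * (y.choose k : ℝ) * (k.factorial : ℝ) *
            (t / (a - t) ^ 2) ^ k := by
  have hsum := hasSum_pow_div_factorial_mul_charlier_mul_charlier_s11 a t x y
  refine ⟨hsum.summable.abs, hsum.tsum_eq.trans ?_⟩
  have htail : ∀ k ≥ min x y + 1, (k ! * t ^ k *
      ((x.choose k * (-1 / a) ^ k * (1 + -1 / a * t) ^ (x - k)) *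
        (y.choose k * (-1 / a) ^ k * (1 + -1 / a * t) ^ (y - k))) : ℝ) = 0 := fun k hk => by
    obtain hxk | hyk : x < k ∨ y < k := by omega
    · simp [Nat.choose_eq_zero_of_lt hxk]
    · simp [Nat.choose_eq_zero_of_lt hyk]
  rw [mul_assoc, eventually_constant_sum htail (by omega : min x y + 1 ≤ x + 1)]
  congr 1
  rw [mul_sum]
  refine sum_congr rfl fun k hk => ?_
  have hk : k ≤ min x y := mem_range_succ_iff.1 hk
  linear_combination (k ! * x.choose k * y.choose k : ℝ) *
    eq_one_sub_div_pow_mul_div_sub_sq_pow a t ha hta (hk.trans (min_le_left x y))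
      (hk.trans (min_le_right x y))
end
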